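/- (Semiclassicalisation theorem) Let A be an abstract Swiss cheese with δ_1(A) > 0. Then there exists a semiclassical abstract Swiss cheese B such that X_B ⊆ X_A and δ_1(B) ≥ δ_1(A). -/

import Mathlib

open Metric Set

/-- An abstract Swiss cheese: a sequence `((a_n, r_n))_{n ≥ 0}` of centres `a n ∈ ℂ` and
non-negative radii `r n ∈ [0, ∞)`. -/
structure SwissCheese where
  a : ℕ → ℂ
  r : ℕ → ℝ
  r_nonneg : ∀ n, 0 ≤ r n

namespace SwissCheese

/-- The associated Swiss cheese set `X_A = closedBall(a₀, r₀) ∖ ⋃_{n ≥ 1} ball(a_n, r_n)`. -/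
def cheeseSet (A : SwissCheese) : Set ℂ :=
  closedBall (A.a 0) (A.r 0) \ ⋃ n ∈ Set.Ici 1, ball (A.a n) (A.r n)

/-- The significant index set `S_A = {n ≥ 1 : r_n > 0}`. -/
def sig (A : SwissCheese) : Set ℕ := {n | 1 ≤ n ∧ 0 < A.r n}

/-- The radius sum `ρ(A) = ∑_{n ≥ 1} r_n` is finite. -/
def RadSummable (A : SwissCheese) : Prop := Summable fun n => A.r (n + 1)

/-- The radius sum `ρ(A) = ∑_{n ≥ 1} r_n`. -/
noncomputable def radSum (A : SwissCheese) : ℝ := ∑' n, A.r (n + 1)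

/-- The discrepancy `δ₁(A) = r₀ − ∑_{n ≥ 1} r_n`. -/
noncomputable def disc (A : SwissCheese) : ℝ := A.r 0 - A.radSum

/-- `A` is classical: `ρ(A) < ∞`, `r₀ > 0`, each significant closed disk is contained in
`ball(a₀, r₀)`, and distinct significant closed disks are disjoint. -/
def IsClassical (A : SwissCheese) : Prop :=
  A.RadSummable ∧ 0 < A.r 0 ∧ ∀ k ∈ A.sig,
    closedBall (A.a k) (A.r k) ⊆ ball (A.a 0) (A.r 0) ∧
    ∀ l ∈ A.sig, l ≠ k → closedBall (A.a k) (A.r k) ∩ closedBall (A.a l) (A.r l) = ∅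

/-- `A` is semiclassical: `ρ(A) < ∞`, `r₀ > 0`, each significant open disk is contained in
`ball(a₀, r₀)`, and distinct significant open disks are disjoint. -/
def IsSemiclassical (A : SwissCheese) : Prop :=
  A.RadSummable ∧ 0 < A.r 0 ∧ ∀ k ∈ A.sig,
    ball (A.a k) (A.r k) ⊆ ball (A.a 0) (A.r 0) ∧
    ∀ l ∈ A.sig, l ≠ k → ball (A.a k) (A.r k) ∩ ball (A.a l) (A.r l) = ∅

/-- `A` is annular: `a₀ = a₁` and `r₀ > r₁ > 0`. -/
def IsAnnular (A : SwissCheese) : Prop := A.a 0 = A.a 1 ∧ A.r 1 < A.r 0 ∧ 0 < A.r 1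

/-- The annular radius sum `ρ_ann(A) = ∑_{n ≥ 2} r_n`. -/
noncomputable def annRadSum (A : SwissCheese) : ℝ := ∑' n, A.r (n + 2)

/-- The annular discrepancy `δ_ann(A) = r₀ − r₁ − 2 ∑_{n ≥ 2} r_n`. -/
noncomputable def annDisc (A : SwissCheese) : ℝ := A.r 0 - A.r 1 - 2 * A.annRadSum

/-- `A` is redundancy-free: every significant open disk meets `closedBall(a₀, r₀)`, and no
significant open disk is contained in another one. -/
def IsRedundancyFree (A : SwissCheese) : Prop :=
  ∀ k ∈ A.sig, (ball (A.a k) (A.r k) ∩ closedBall (A.a 0) (A.r 0)).Nonempty ∧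
    ∀ l ∈ A.sig, l ≠ k → ¬ ball (A.a k) (A.r k) ⊆ ball (A.a l) (A.r l)

/-- `H_A(U)`: the set of significant indices whose closed disk meets `U`. -/
def HSet (A : SwissCheese) (U : Set ℂ) : Set ℕ :=
  {n | n ∈ A.sig ∧ (closedBall (A.a n) (A.r n) ∩ U).Nonempty}

/-- `ρ_U(A) = ∑_{n ∈ H_A(U)} r_n`. -/
noncomputable def rhoU (A : SwissCheese) (U : Set ℂ) : ℝ := ∑' n : A.HSet U, A.r n

/-- The error set `E(A)`. -/
def errorSet (A : SwissCheese) : Set ℂ :=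
  (⋃ m ∈ A.sig, ⋃ n ∈ A.sig, ⋃ _ : m ≠ n,
      closedBall (A.a m) (A.r m) ∩ closedBall (A.a n) (A.r n)) ∪
    ⋃ n ∈ A.sig, (ball (A.a 0) (A.r 0))ᶜ ∩ closedBall (A.a n) (A.r n)

/-- A Swiss cheese set is compact. -/
instance (A : SwissCheese) : CompactSpace A.cheeseSet :=
  isCompact_iff_compactSpace.mp
    ((isCompact_closedBall _ _).diff (isOpen_biUnion fun _ _ => isOpen_ball))

end SwissCheese

/-!
Zorn's lemma, applied to equivalence relations `E` on the indices, ordered by inclusion. Call `E`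
admissible if the holes in the class of `0` can be cleared by shrinking the outer disc by at most
their total radius, and the holes in every other class lie in one open disc whose radius is their
total radius. The union of a chain is admissible by compactness (finite intersection property).
In a maximal admissible relation the covering discs of different classes are disjoint and lie in
the shrunken outer disc, for otherwise the two classes could be merged. These discs form a
semiclassical cheese `B` with `X_B ⊆ X_A`, and since the classes are disjoint, the radii of its
holes and the shrinking of the outer disc add up to at most `∑_{n ∈ S_A} r_n ≤ ρ(A)`.
-/

open Function

theorem exists_dist_eq_and_dist_eq_add {E : Type*} [NormedAddCommGroup E] [NormedSpace ℝ E]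
    {x y : E} (hxy : x ≠ y) {ρ : ℝ} (hρ : 0 ≤ ρ) :
    ∃ z, dist z x = ρ ∧ dist z y = dist x y + ρ := by
  have hd : 0 < dist y x := dist_pos.2 hxy.symm
  refine ⟨AffineMap.lineMap y x (1 + ρ / dist y x), ?_, ?_⟩
  · rw [dist_lineMap_right, sub_add_cancel_left, norm_neg, Real.norm_eq_abs,
      abs_of_nonneg (by positivity), div_mul_cancel₀ _ hd.ne']
  · rw [dist_lineMap_left, Real.norm_eq_abs, abs_of_nonneg (by positivity), add_mul,
      div_mul_cancel₀ _ hd.ne', one_mul, dist_comm]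

theorem IsCompact.inter_biInter_sUnion_nonempty {X ι : Type*} [TopologicalSpace X] {K : Set X}
    (hK : IsCompact K) {F : ι → Set X} (hF : ∀ i, IsClosed (F i)) {𝒟 : Set (Set ι)}
    (h𝒟 : DirectedOn (· ⊆ ·) 𝒟) {y : ι} (hy : y ∈ ⋃₀ 𝒟)
    (hne : ∀ D ∈ 𝒟, y ∈ D → (K ∩ ⋂ i ∈ D, F i).Nonempty) :
    (K ∩ ⋂ i ∈ ⋃₀ 𝒟, F i).Nonempty := by
  obtain ⟨p, hpK, hp⟩ :=
      hK.inter_iInter_nonempty (fun i : ⋃₀ 𝒟 => F i) (fun i => hF i) fun u => by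
    obtain ⟨D, hD, hyD⟩ := hy
    have hu : insert y (Subtype.val '' (u : Set (⋃₀ 𝒟))) ⊆ ⋃₀ 𝒟 :=
      insert_subset ⟨D, hD, hyD⟩ (by rintro _ ⟨i, -, rfl⟩; exact i.2)
    obtain ⟨D', hD', hsub⟩ := h𝒟.exists_mem_subset_of_finite_of_subset_sUnion ⟨D, hD⟩
      ((u.finite_toSet.image _).insert y) hu
    obtain ⟨p, hpK, hp⟩ := hne D' hD' (hsub (mem_insert _ _))
    exact ⟨p, hpK, mem_iInter₂.2 fun i hi =>
      mem_iInter₂.1 hp i (hsub (mem_insert_of_mem _ ⟨i, hi, rfl⟩))⟩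
  exact ⟨p, hpK, mem_iInter₂.2 fun i hi => mem_iInter.1 hp ⟨i, hi⟩⟩

section RelClass

variable {α : Type*}

def relClass (E : Set (α × α)) (x : α) : Set α := {y | (x, y) ∈ E}

variable {E : Set (α × α)}

theorem relClass_eq_of_mem (hE : Equivalence fun x y => (x, y) ∈ E) {x y : α} (h : (x, y) ∈ E) :
    relClass E x = relClass E y :=
  Set.ext fun _ => ⟨hE.trans (hE.symm h), hE.trans h⟩

theorem disjoint_relClass (hE : Equivalence fun x y => (x, y) ∈ E) {x y : α} (h : (x, y) ∉ E) :
    Disjoint (relClass E x) (relClass E y) :=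
  disjoint_left.2 fun _ hx hy => h (hE.trans hx (hE.symm hy))

theorem relClass_mono {F : Set (α × α)} (h : E ⊆ F) (x : α) : relClass E x ⊆ relClass F x :=
  fun _ hy => h hy

theorem relClass_sUnion (c : Set (Set (α × α))) (x : α) :
    relClass (⋃₀ c) x = ⋃₀ ((relClass · x) '' c) := by
  ext y
  simp [relClass]

theorem IsChain.directedOn_relClass {c : Set (Set (α × α))} (hc : IsChain (· ⊆ ·) c) (x : α) :
    DirectedOn (· ⊆ ·) ((relClass · x) '' c) := by
  rintro _ ⟨E, hE, rfl⟩ _ ⟨F, hF, rfl⟩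
  rcases hc.total hE hF with h | h
  · exact ⟨_, mem_image_of_mem _ hF, relClass_mono h x, subset_rfl⟩
  · exact ⟨_, mem_image_of_mem _ hE, subset_rfl, relClass_mono h x⟩

theorem IsChain.equivalence_sUnion {c : Set (Set (α × α))} (hc : IsChain (· ⊆ ·) c)
    (hne : c.Nonempty) (h : ∀ E ∈ c, Equivalence fun x y => (x, y) ∈ E) :
    Equivalence fun x y => (x, y) ∈ ⋃₀ c where
  refl x := ⟨_, hne.some_mem, (h _ hne.some_mem).refl x⟩
  symm := fun ⟨E, hE, hxy⟩ => ⟨E, hE, (h E hE).symm hxy⟩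
  trans := fun ⟨E, hE, hxy⟩ ⟨F, hF, hyz⟩ => (hc.total hE hF).elim
    (fun hEF => ⟨F, hF, (h F hF).trans (hEF hxy) hyz⟩)
    (fun hFE => ⟨E, hE, (h E hE).trans hxy (hFE hyz)⟩)

theorem Equivalence.union_prod_self (hE : Equivalence fun x y => (x, y) ∈ E)
    {D : Set α} (hD : ∀ x ∈ D, relClass E x ⊆ D) :
    Equivalence fun x y => (x, y) ∈ E ∪ D ×ˢ D where
  refl x := Or.inl (hE.refl x)
  symm := by
    rintro x y (h | ⟨hx, hy⟩)
    exacts [Or.inl (hE.symm h), Or.inr ⟨hy, hx⟩]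
  trans := by
    rintro x y z (hxy | ⟨hx, hy⟩) (hyz | ⟨hy', hz⟩)
    · exact Or.inl (hE.trans hxy hyz)
    · exact Or.inr ⟨hD y hy' (hE.symm hxy), hz⟩
    · exact Or.inr ⟨hx, hD y hy hyz⟩
    · exact Or.inr ⟨hx, hz⟩

theorem relClass_union_prod_self_of_mem {D : Set α} (hD : ∀ x ∈ D, relClass E x ⊆ D) {x : α}
    (hx : x ∈ D) : relClass (E ∪ D ×ˢ D) x = D :=
  Subset.antisymm (fun _ hy => hy.elim (fun h => hD x hx h) And.right) fun _ hy => Or.inr ⟨hx, hy⟩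

theorem relClass_union_prod_self_of_notMem {D : Set α} {x : α} (hx : x ∉ D) :
    relClass (E ∪ D ×ˢ D) x = relClass E x :=
  Subset.antisymm (fun _ hy => hy.resolve_right fun h => hx h.1) fun _ hy => Or.inl hy

end RelClass

namespace SwissCheese

variable (A : SwissCheese)

noncomputable def radSumOn (C : Set ℕ) : ℝ := ∑' n, C.indicator (A.sig.indicator A.r) n

variable {A}

theorem RadSummable.summable_indicator_sig (hA : A.RadSummable) :
    Summable (A.sig.indicator A.r) :=
  ((summable_nat_add_iff 1).mp hA).indicator _

theorem radSumOn_nonneg (C : Set ℕ) : 0 ≤ A.radSumOn C :=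
  tsum_nonneg fun _ => indicator_nonneg (fun _ _ => indicator_nonneg (fun n _ => A.r_nonneg n) _) _

theorem radSumOn_empty : A.radSumOn ∅ = 0 := by
  simp [radSumOn]

theorem radSumOn_mono (hA : A.RadSummable) {C D : Set ℕ} (h : C ⊆ D) :
    A.radSumOn C ≤ A.radSumOn D :=
  have hs := hA.summable_indicator_sig
  (hs.indicator C).tsum_le_tsum
    (indicator_le_indicator_of_subset h (indicator_nonneg fun n _ => A.r_nonneg n))
    (hs.indicator D)

theorem radSumOn_union (hA : A.RadSummable) {C D : Set ℕ} (h : Disjoint C D) :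
    A.radSumOn (C ∪ D) = A.radSumOn C + A.radSumOn D := by
  have hs := hA.summable_indicator_sig
  rw [radSumOn, indicator_union_of_disjoint h, (hs.indicator C).tsum_add (hs.indicator D)]
  rfl

theorem r_le_radSumOn (hA : A.RadSummable) {C : Set ℕ} {n : ℕ} (hn : n ∈ C) (hsig : n ∈ A.sig) :
    A.r n ≤ A.radSumOn C := by
  have := (hA.summable_indicator_sig.indicator C).le_tsum n fun _ _ =>
    indicator_nonneg (fun _ _ => indicator_nonneg (fun n _ => A.r_nonneg n) _) _
  rwa [indicator_of_mem hn, indicator_of_mem hsig] at this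

theorem radSumOn_univ_le_radSum (hA : A.RadSummable) : A.radSumOn univ ≤ A.radSum := by
  have hs := hA.summable_indicator_sig
  have h0 : A.sig.indicator A.r 0 = 0 := indicator_of_notMem (fun h => h.1.not_gt zero_lt_one) _
  rw [radSumOn, indicator_univ, hs.tsum_eq_zero_add, h0, zero_add]
  exact ((summable_nat_add_iff 1).mpr hs).tsum_le_tsum
    (fun n => indicator_le_self' (fun n _ => A.r_nonneg n) (n + 1)) hA

theorem sum_radSumOn_le (hA : A.RadSummable) {ι : Type*} {T : ι → Set ℕ}
    (hT : Pairwise (Disjoint on T)) {S : Set ℕ} (hS : ∀ i, T i ⊆ S) (u : Finset ι) :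
    ∑ i ∈ u, A.radSumOn (T i) ≤ A.radSumOn S := by
  have hs := hA.summable_indicator_sig
  calc ∑ i ∈ u, A.radSumOn (T i)
      = A.radSumOn (⋃ i ∈ u, T i) := by
        rw [radSumOn, Finset.indicator_biUnion u T (hT.set_pairwise _),
          Summable.tsum_finsetSum fun i _ => hs.indicator _]
        rfl
    _ ≤ A.radSumOn S := radSumOn_mono hA (iUnion₂_subset fun i _ => hS i)

theorem summable_radSumOn (hA : A.RadSummable) {ι : Type*} {T : ι → Set ℕ}
    (hT : Pairwise (Disjoint on T)) {S : Set ℕ} (hS : ∀ i, T i ⊆ S) :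
    Summable fun i => A.radSumOn (T i) :=
  summable_of_sum_le (fun _ => radSumOn_nonneg _) (sum_radSumOn_le hA hT hS)

theorem tsum_radSumOn_le (hA : A.RadSummable) {ι : Type*} {T : ι → Set ℕ}
    (hT : Pairwise (Disjoint on T)) {S : Set ℕ} (hS : ∀ i, T i ⊆ S) :
    ∑' i, A.radSumOn (T i) ≤ A.radSumOn S :=
  Real.tsum_le_of_sum_le (fun _ => radSumOn_nonneg _) (sum_radSumOn_le hA hT hS)

variable (A)

/-- `closedBall c s` lies in the outer disc of `A`, its interior misses the holes indexed by `C`,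
and it is smaller than the outer disc by at most the total radius of these holes. -/
def IsInnerDisc (C : Set ℕ) (c : ℂ) (s : ℝ) : Prop :=
  0 ≤ s ∧ dist c (A.a 0) + s ≤ A.r 0 ∧ A.r 0 - A.radSumOn C ≤ s ∧
    ∀ n ∈ C, n ∈ A.sig → s + A.r n ≤ dist c (A.a n)

/-- `ball c (A.radSumOn C)` contains the holes indexed by `C`. -/
def IsCoverCentre (C : Set ℕ) (c : ℂ) : Prop :=
  ∀ n ∈ C, n ∈ A.sig → dist c (A.a n) + A.r n ≤ A.radSumOn C

variable {A}

theorem exists_isInnerDisc_sUnion (hA : A.RadSummable) {𝒟 : Set (Set ℕ)}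
    (h𝒟 : DirectedOn (· ⊆ ·) 𝒟) (h0 : 0 ∈ ⋃₀ 𝒟) (h : ∀ D ∈ 𝒟, ∃ c s, A.IsInnerDisc D c s) :
    ∃ c s, A.IsInnerDisc (⋃₀ 𝒟) c s := by
  set K : Set (ℂ × ℝ) :=
    {p | 0 ≤ p.2 ∧ dist p.1 (A.a 0) + p.2 ≤ A.r 0 ∧ A.r 0 - A.radSumOn (⋃₀ 𝒟) ≤ p.2}
  have hK : IsCompact K := by
    refine ((isCompact_closedBall (A.a 0) (A.r 0)).prod (isCompact_Icc (a := 0) (b := A.r 0)))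
      |>.of_isClosed_subset ?_ fun p ⟨hp, hpr, _⟩ => ⟨?_, hp, ?_⟩
    · exact (isClosed_le continuous_const continuous_snd).inter
        ((isClosed_le ((continuous_fst.dist continuous_const).add continuous_snd)
          continuous_const).inter
          (isClosed_le continuous_const continuous_snd))
    · exact mem_closedBall.2 (by linarith)
    · linarith [dist_nonneg (x := p.1) (y := A.a 0)]
  obtain ⟨⟨c, s⟩, ⟨hs, hcs, hrs⟩, havoid⟩ := hK.inter_biInter_sUnion_nonempty
    (F := fun n => {p : ℂ × ℝ | n ∈ A.sig → p.2 + A.r n ≤ dist p.1 (A.a n)})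
    (fun n => isClosed_imp isOpen_const (isClosed_le (continuous_snd.add continuous_const)
      (continuous_fst.dist continuous_const))) h𝒟 h0
    fun D hD _ => by
      obtain ⟨c, s, hs, hcs, hrs, havoid⟩ := h D hD
      have := radSumOn_mono hA (subset_sUnion_of_mem hD)
      exact ⟨(c, s), ⟨hs, hcs, by linarith⟩, mem_iInter₂.2 havoid⟩
  exact ⟨c, s, hs, hcs, hrs, mem_iInter₂.1 havoid⟩

theorem exists_isCoverCentre_sUnion (hA : A.RadSummable) {𝒟 : Set (Set ℕ)}
    (h𝒟 : DirectedOn (· ⊆ ·) 𝒟) (h : ∀ D ∈ 𝒟, ∃ c, A.IsCoverCentre D c) :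
    ∃ c, A.IsCoverCentre (⋃₀ 𝒟) c := by
  by_cases hsig : ∃ y ∈ ⋃₀ 𝒟, y ∈ A.sig
  swap
  · push Not at hsig
    exact ⟨0, fun n hn hn' => absurd hn' (hsig n hn)⟩
  obtain ⟨y, hy, hysig⟩ := hsig
  set F : ℕ → Set ℂ := fun n => {c | n ∈ A.sig → dist c (A.a n) + A.r n ≤ A.radSumOn (⋃₀ 𝒟)}
  have hK : IsCompact (F y) := by
    convert isCompact_closedBall (A.a y) (A.radSumOn (⋃₀ 𝒟) - A.r y) using 1
    ext c
    simp [F, hysig, le_sub_iff_add_le]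
  obtain ⟨c, -, hc⟩ := hK.inter_biInter_sUnion_nonempty (F := F)
    (fun n => isClosed_imp isOpen_const (isClosed_le (by fun_prop) continuous_const)) h𝒟 hy
    fun D hD hyD => by
      obtain ⟨c, hc⟩ := h D hD
      have hcF : ∀ n ∈ D, c ∈ F n := fun n hn hn' =>
        (hc n hn hn').trans (radSumOn_mono hA (subset_sUnion_of_mem hD))
      exact ⟨c, hcF y hyD, mem_iInter₂.2 hcF⟩
  exact ⟨c, mem_iInter₂.1 hc⟩

variable (A) in
structure IsAdmissible (E : Set (ℕ × ℕ)) : Prop where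
  equivalence : Equivalence fun m n => (m, n) ∈ E
  exists_isInnerDisc : ∃ c s, A.IsInnerDisc (relClass E 0) c s
  exists_isCoverCentre : ∀ n, (n, 0) ∉ E → ∃ c, A.IsCoverCentre (relClass E n) c

theorem isAdmissible_diagonal (hA : A.RadSummable) : A.IsAdmissible (diagonal ℕ) where
  equivalence := ⟨fun _ => rfl, Eq.symm, Eq.trans⟩
  exists_isInnerDisc := ⟨A.a 0, A.r 0, A.r_nonneg 0, by simp,
    by linarith [A.radSumOn_nonneg (relClass (diagonal ℕ) 0)], fun n hn hsig => by
      obtain rfl : 0 = n := hn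
      exact absurd hsig.1 (by norm_num)⟩
  exists_isCoverCentre n _ := ⟨A.a n, fun m hm hsig => by
    obtain rfl : n = m := hm
    simpa using r_le_radSumOn hA (C := relClass (diagonal ℕ) n) rfl hsig⟩

theorem isAdmissible_sUnion (hA : A.RadSummable) {c : Set (Set (ℕ × ℕ))}
    (hc : IsChain (· ⊆ ·) c) (hne : c.Nonempty) (h : ∀ E ∈ c, A.IsAdmissible E) :
    A.IsAdmissible (⋃₀ c) where
  equivalence := hc.equivalence_sUnion hne fun E hE => (h E hE).equivalence
  exists_isInnerDisc := by
    rw [relClass_sUnion]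
    refine exists_isInnerDisc_sUnion hA (hc.directedOn_relClass 0)
      ⟨_, mem_image_of_mem _ hne.some_mem, (h _ hne.some_mem).equivalence.refl 0⟩ ?_
    rintro _ ⟨E, hE, rfl⟩
    exact (h E hE).exists_isInnerDisc
  exists_isCoverCentre n hn := by
    rw [relClass_sUnion]
    refine exists_isCoverCentre_sUnion hA (hc.directedOn_relClass n) ?_
    rintro _ ⟨E, hE, rfl⟩
    exact (h E hE).exists_isCoverCentre n fun hn0 => hn ⟨E, hE, hn0⟩

theorem exists_maximal_isAdmissible (hA : A.RadSummable) : ∃ E, Maximal A.IsAdmissible E := by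
  obtain ⟨E, -, hE⟩ := zorn_subset_nonempty {E | A.IsAdmissible E}
    (fun c hc hchain hne => ⟨⋃₀ c, isAdmissible_sUnion hA hchain hne hc,
      fun _ => subset_sUnion_of_mem⟩) _ (isAdmissible_diagonal hA)
  exact ⟨E, hE⟩

theorem IsAdmissible.union_prod_self {E : Set (ℕ × ℕ)} (hE : A.IsAdmissible E) {i j : ℕ}
    (hinner : 0 ∈ relClass E i ∪ relClass E j →
      ∃ c s, A.IsInnerDisc (relClass E i ∪ relClass E j) c s)
    (hcover : 0 ∉ relClass E i ∪ relClass E j →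
      ∃ c, A.IsCoverCentre (relClass E i ∪ relClass E j) c) :
    A.IsAdmissible (E ∪ (relClass E i ∪ relClass E j) ×ˢ (relClass E i ∪ relClass E j)) := by
  set D := relClass E i ∪ relClass E j
  have hD : ∀ x ∈ D, relClass E x ⊆ D := by
    rintro x (hx | hx) <;> rw [← relClass_eq_of_mem hE.equivalence hx] <;> simp [D]
  refine ⟨hE.equivalence.union_prod_self hD, ?_, fun n hn => ?_⟩
  · by_cases h0 : 0 ∈ D
    · rw [relClass_union_prod_self_of_mem hD h0]
      exact hinner h0
    · rw [relClass_union_prod_self_of_notMem h0]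
      exact hE.exists_isInnerDisc
  · by_cases hnD : n ∈ D
    · rw [relClass_union_prod_self_of_mem hD hnD]
      exact hcover fun h0 => hn (Or.inr ⟨hnD, h0⟩)
    · rw [relClass_union_prod_self_of_notMem hnD]
      exact hE.exists_isCoverCentre n fun h => hn (Or.inl h)

theorem mem_of_maximal {E : Set (ℕ × ℕ)} (hE : Maximal A.IsAdmissible E) {i j : ℕ}
    (hinner : 0 ∈ relClass E i ∪ relClass E j →
      ∃ c s, A.IsInnerDisc (relClass E i ∪ relClass E j) c s)
    (hcover : 0 ∉ relClass E i ∪ relClass E j →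
      ∃ c, A.IsCoverCentre (relClass E i ∪ relClass E j) c) :
    (i, j) ∈ E :=
  hE.2 (hE.1.union_prod_self hinner hcover) subset_union_left
    (Or.inr ⟨Or.inl (hE.1.equivalence.refl i), Or.inr (hE.1.equivalence.refl j)⟩)

section Maximal

variable {E : Set (ℕ × ℕ)}

theorem dist_add_radSumOn_le (hA : A.RadSummable) (hlt : A.radSumOn univ < A.r 0)
    (hE : Maximal A.IsAdmissible E) {c : ℂ} {s : ℝ} (hcs : A.IsInnerDisc (relClass E 0) c s)
    {k : ℕ} (hk : (k, 0) ∉ E) {w : ℂ} (hw : A.IsCoverCentre (relClass E k) w) :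
    dist c w + A.radSumOn (relClass E k) ≤ s := by
  have hEq := hE.1.equivalence
  obtain ⟨hs, hcs, hs_ge, havoid⟩ := hcs
  set R := A.radSumOn (relClass E k)
  have hdisj := disjoint_relClass hEq fun h => hk (hEq.symm h)
  have hR : A.radSumOn (relClass E 0) + R < A.r 0 := by
    rw [← radSumOn_union hA hdisj]
    exact (radSumOn_mono hA (subset_univ _)).trans_lt hlt
  by_contra! hfar
  have hcw : c ≠ w := by
    rintro rfl
    rw [dist_self] at hfar
    linarith
  -- Moving the centre a distance `R` away from `w` and shrinking the radius by `R` gives an inner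
  -- disc for the union of the classes of `0` and `k`.
  obtain ⟨z, hzc, hzw⟩ := exists_dist_eq_and_dist_eq_add hcw (A.radSumOn_nonneg (relClass E k))
  refine hk (hEq.symm (mem_of_maximal hE (fun _ => ⟨z, s - R, ?_⟩)
    fun h => absurd (Or.inl (hEq.refl 0)) h))
  refine ⟨by linarith, by linarith [dist_triangle z c (A.a 0)],
    by rw [radSumOn_union hA hdisj]; linarith, ?_⟩
  rintro n (hn | hn) hsig
  · linarith [havoid n hn hsig, dist_triangle c z (A.a n), dist_comm c z]
  · linarith [hw n hn hsig, dist_triangle z (A.a n) w, dist_comm w (A.a n)]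

theorem radSumOn_add_radSumOn_le_dist (hA : A.RadSummable) (hE : Maximal A.IsAdmissible E)
    {j k : ℕ} (hjk : (j, k) ∉ E) (hj : (j, 0) ∉ E) (hk : (k, 0) ∉ E) {wj wk : ℂ}
    (hwj : A.IsCoverCentre (relClass E j) wj) (hwk : A.IsCoverCentre (relClass E k) wk) :
    A.radSumOn (relClass E j) + A.radSumOn (relClass E k) ≤ dist wj wk := by
  by_contra! hclose
  obtain ⟨z, hzj, hzk⟩ := exists_dist_le_le (radSumOn_nonneg _) (radSumOn_nonneg _) hclose.le
  refine hjk (mem_of_maximal hE (fun h0 => (h0.elim hj hk).elim) fun _ => ⟨z, ?_⟩)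
  rw [IsCoverCentre, radSumOn_union hA (disjoint_relClass hE.1.equivalence hjk)]
  rintro n (hn | hn) hsig
  · linarith [hwj n hn hsig, dist_triangle z wj (A.a n), dist_comm wj z]
  · linarith [hwk n hn hsig, dist_triangle z wk (A.a n)]

end Maximal

section HoleClass

variable {E : Set (ℕ × ℕ)}

def IsHoleRep (E : Set (ℕ × ℕ)) (n : ℕ) : Prop := (n, 0) ∉ E ∧ ∀ m, (n, m) ∈ E → n ≤ m

def holeClass (E : Set (ℕ × ℕ)) (n : ℕ) : Set ℕ := {m | IsHoleRep E n ∧ (n, m) ∈ E}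

theorem IsHoleRep.ne_zero (hE : Equivalence fun m n => (m, n) ∈ E) {n : ℕ}
    (hn : IsHoleRep E n) : n ≠ 0 := by
  rintro rfl
  exact hn.1 (hE.refl 0)

theorem IsHoleRep.notMem (hE : Equivalence fun m n => (m, n) ∈ E) {m n : ℕ}
    (hm : IsHoleRep E m) (hn : IsHoleRep E n) (hmn : m ≠ n) : (m, n) ∉ E :=
  fun h => hmn (le_antisymm (hm.2 n h) (hn.2 m (hE.symm h)))

theorem holeClass_of_isHoleRep {n : ℕ} (hn : IsHoleRep E n) : holeClass E n = relClass E n := by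
  simp [holeClass, relClass, hn]

theorem pairwise_disjoint_holeClass (hE : Equivalence fun m n => (m, n) ∈ E) :
    Pairwise (Disjoint on holeClass E) := fun _ _ hij =>
  disjoint_left.2 fun _ ⟨hi, him⟩ ⟨hj, hjm⟩ => hi.notMem hE hj hij (hE.trans him (hE.symm hjm))

theorem holeClass_subset_compl (hE : Equivalence fun m n => (m, n) ∈ E) (n : ℕ) :
    holeClass E n ⊆ (relClass E 0)ᶜ :=
  fun _ ⟨hn, hnm⟩ h0m => hn.1 (hE.trans hnm (hE.symm h0m))

theorem exists_isHoleRep (hE : Equivalence fun m n => (m, n) ∈ E) {m : ℕ} (hm : (m, 0) ∉ E) :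
    ∃ j, IsHoleRep E j ∧ (j, m) ∈ E := by
  have hj : (m, sInf (relClass E m)) ∈ E := Nat.sInf_mem (s := relClass E m) ⟨m, hE.refl m⟩
  exact ⟨_, ⟨fun h => hm (hE.trans hj h), fun l hl => Nat.sInf_le (hE.trans hj hl)⟩, hE.symm hj⟩

theorem isHoleRep_of_radSumOn_pos {n : ℕ} (hn : 0 < A.radSumOn (holeClass E n)) :
    IsHoleRep E n := by
  by_contra h
  simp [holeClass, h, radSumOn_empty] at hn

end HoleClass

noncomputable def ofDiscs (c : ℂ) (s : ℝ) (w : ℕ → ℂ) (R : ℕ → ℝ) (hs : 0 ≤ s)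
    (hR : ∀ n, 0 ≤ R n) : SwissCheese where
  a := update w 0 c
  r := update R 0 s
  r_nonneg n := by
    rcases eq_or_ne n 0 with rfl | hn
    · simpa using hs
    · simpa [hn] using hR n

section OfDiscs

variable {c : ℂ} {s : ℝ} {w : ℕ → ℂ} {R : ℕ → ℝ} {hs : 0 ≤ s} {hR : ∀ n, 0 ≤ R n}

theorem isSemiclassical_ofDiscs (hs_pos : 0 < s) (hsum : Summable R)
    (hin : ∀ n, 0 < R n → R n + dist (w n) c ≤ s)
    (hdisj : ∀ m n, m ≠ n → 0 < R m → 0 < R n → R m + R n ≤ dist (w m) (w n)) :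
    (ofDiscs c s w R hs hR).IsSemiclassical := by
  refine ⟨?_, by simpa [ofDiscs] using hs_pos, fun k ⟨hk, hRk⟩ => ?_⟩
  · simpa [RadSummable, ofDiscs] using (summable_nat_add_iff 1).mpr hsum
  · have hk0 : k ≠ 0 := Nat.one_le_iff_ne_zero.mp hk
    simp only [ofDiscs, update_of_ne hk0, update_self] at hRk ⊢
    refine ⟨ball_subset_ball' (hin k hRk), fun l ⟨hl, hRl⟩ hlk => ?_⟩
    have hl0 : l ≠ 0 := Nat.one_le_iff_ne_zero.mp hl
    simp only [update_of_ne hl0] at hRl ⊢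
    exact disjoint_iff_inter_eq_empty.mp (ball_disjoint_ball (hdisj k l hlk.symm hRk hRl))

theorem disc_ofDiscs : (ofDiscs c s w R hs hR).disc = s - ∑' n, R (n + 1) := by
  simp [disc, radSum, ofDiscs]

end OfDiscs

theorem cheeseSet_subset_cheeseSet {A B : SwissCheese}
    (h0 : closedBall (B.a 0) (B.r 0) ⊆ closedBall (A.a 0) (A.r 0))
    (hholes : ∀ n ∈ A.sig, Disjoint (closedBall (B.a 0) (B.r 0)) (ball (A.a n) (A.r n)) ∨
      ∃ m ≥ 1, ball (A.a n) (A.r n) ⊆ ball (B.a m) (B.r m)) :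
    B.cheeseSet ⊆ A.cheeseSet := by
  rintro x ⟨hx0, hx⟩
  refine ⟨h0 hx0, fun hxA => ?_⟩
  obtain ⟨n, hn, hxn⟩ := mem_iUnion₂.1 hxA
  rcases hholes n ⟨hn, nonempty_ball.1 ⟨x, hxn⟩⟩ with hd | ⟨m, hm, hsub⟩
  · exact hd.notMem_of_mem_left hx0 hxn
  · exact hx (mem_biUnion hm (hsub hxn))

section OfRelation

variable {E : Set (ℕ × ℕ)} {c : ℂ} {s : ℝ} {w : ℕ → ℂ}

variable (A) in
/-- The holes are the discs `ball (w n) (A.radSumOn (relClass E n))`, one for each class not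
containing `0`, indexed by its least element `n`. -/
noncomputable def ofRelation (E : Set (ℕ × ℕ)) (c : ℂ) (s : ℝ) (hs : 0 ≤ s) (w : ℕ → ℂ) :
    SwissCheese :=
  ofDiscs c s w (fun n => A.radSumOn (holeClass E n)) hs fun _ => radSumOn_nonneg _

theorem cheeseSet_ofRelation_subset (hE : Equivalence fun m n => (m, n) ∈ E)
    (hcs : A.IsInnerDisc (relClass E 0) c s)
    (hw : ∀ n, (n, 0) ∉ E → A.IsCoverCentre (relClass E n) (w n)) :
    (A.ofRelation E c s hcs.1 w).cheeseSet ⊆ A.cheeseSet := by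
  obtain ⟨-, hc, -, havoid⟩ := hcs
  refine cheeseSet_subset_cheeseSet ?_ fun n hn => ?_
  · simp only [ofRelation, ofDiscs, update_self]
    exact closedBall_subset_closedBall' (by linarith [dist_comm c (A.a 0)])
  by_cases hn0 : (n, 0) ∈ E
  · left
    simp only [ofRelation, ofDiscs, update_self]
    exact closedBall_disjoint_ball (havoid n (hE.symm hn0) hn)
  · right
    obtain ⟨j, hj, hjn⟩ := exists_isHoleRep hE hn0
    refine ⟨j, Nat.one_le_iff_ne_zero.2 (hj.ne_zero hE), ?_⟩
    simp only [ofRelation, ofDiscs, update_of_ne (hj.ne_zero hE), holeClass_of_isHoleRep hj]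
    exact ball_subset_ball' (by linarith [hw j hj.1 n hjn hn, dist_comm (A.a n) (w j)])

theorem sub_radSumOn_univ_le_disc_ofRelation (hA : A.RadSummable)
    (hE : Equivalence fun m n => (m, n) ∈ E) (hcs : A.IsInnerDisc (relClass E 0) c s) :
    A.r 0 - A.radSumOn univ ≤ (A.ofRelation E c s hcs.1 w).disc := by
  have hsplit : A.radSumOn (relClass E 0) + A.radSumOn (relClass E 0)ᶜ = A.radSumOn univ := by
    rw [← radSumOn_union hA disjoint_compl_right, union_compl_self]
  have hholes : ∑' n, A.radSumOn (holeClass E (n + 1)) ≤ A.radSumOn (relClass E 0)ᶜ :=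
    tsum_radSumOn_le hA ((pairwise_disjoint_holeClass hE).comp_of_injective
      (add_left_injective 1)) fun n => holeClass_subset_compl hE _
  rw [ofRelation, disc_ofDiscs]
  linarith [hcs.2.2.1]

theorem isSemiclassical_ofRelation (hA : A.RadSummable) (hlt : A.radSumOn univ < A.r 0)
    (hE : Maximal A.IsAdmissible E) (hcs : A.IsInnerDisc (relClass E 0) c s)
    (hw : ∀ n, (n, 0) ∉ E → A.IsCoverCentre (relClass E n) (w n)) :
    (A.ofRelation E c s hcs.1 w).IsSemiclassical := by
  have hEq := hE.1.equivalence
  refine isSemiclassical_ofDiscs ?_ ?_ (fun n hn => ?_) fun m n hmn hm hn => ?_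
  · linarith [hcs.2.2.1, radSumOn_mono hA (subset_univ (relClass E 0))]
  · exact summable_radSumOn hA (pairwise_disjoint_holeClass hEq) (holeClass_subset_compl hEq)
  · have hn := isHoleRep_of_radSumOn_pos hn
    rw [holeClass_of_isHoleRep hn, dist_comm]
    linarith [dist_add_radSumOn_le hA hlt hE hcs hn.1 (hw n hn.1)]
  · have hm := isHoleRep_of_radSumOn_pos hm
    have hn := isHoleRep_of_radSumOn_pos hn
    rw [holeClass_of_isHoleRep hm, holeClass_of_isHoleRep hn]
    exact radSumOn_add_radSumOn_le_dist hA hE (hm.notMem hEq hn hmn) hm.1 hn.1 (hw m hm.1)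
      (hw n hn.1)

end OfRelation

end SwissCheese

/-- Semiclassicalisation theorem: if `δ₁(A) > 0` (in particular
`ρ(A) < ∞`), then there is a semiclassical abstract Swiss cheese `B` with `X_B ⊆ X_A` and
`δ₁(B) ≥ δ₁(A)`. -/
theorem stmt_15 (A : SwissCheese) (hsum : A.RadSummable) (hpos : 0 < A.disc) :
    ∃ B : SwissCheese, B.IsSemiclassical ∧ B.cheeseSet ⊆ A.cheeseSet ∧
      A.disc ≤ B.disc := by
  have hle := A.radSumOn_univ_le_radSum hsum
  rw [SwissCheese.disc] at hpos ⊢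
  have hlt : A.radSumOn univ < A.r 0 := by linarith
  obtain ⟨E, hE⟩ := A.exists_maximal_isAdmissible hsum
  obtain ⟨c, s, hcs⟩ := hE.1.exists_isInnerDisc
  choose! w hw using hE.1.exists_isCoverCentre
  refine ⟨A.ofRelation E c s hcs.1 w, A.isSemiclassical_ofRelation hsum hlt hE hcs hw,
    A.cheeseSet_ofRelation_subset hE.1.equivalence hcs hw, ?_⟩
  linarith [A.sub_radSumOn_univ_le_disc_ofRelation (w := w) hsum hE.1.equivalence hcs]
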